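/- arXiv:1603.04796 — 3 statements merged into one kernel-verified Lean document; each statement's English description precedes it below -/
import Mathlib

section
/- Fix M, N ∈ ℕ. For a tempered distribution ψ on ℝ^d set ‖ψ‖_{M,N} := sup{ ‖ψ∗f‖_∞ / ‖f‖_{M,N} : f ∈ 𝓢(ℝ^d), f ≠ 0 }, and let 𝓢'_{M,N} := { ψ : ‖ψ‖_{M,N} < ∞ }. If (ψ_n) is a sequence in 𝓢'_{M,N} that is Cauchy with respect to ‖·‖_{M,N}, then there exists a tempered distribution ψ ∈ 𝓢'_{M,N} such that for every f ∈ 𝓢(ℝ^d), the functions ψ_n∗f converge uniformly on ℝ^d to ψ∗f. -/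
/- Common setting: tempered distributions on ℝ^d, translation boundedness, convolution with
Schwartz functions, smooth approximate van Hove families, autocorrelation, and almost
periodicity, following "Diffraction theory and almost periodic distributions"
(Strungaru–Terauds). -/

open MeasureTheory SchwartzMap Filter Topology Metric Complex
open scoped ComplexConjugate ENNReal Real RealInnerProductSpace ContDiff

noncomputable section

/-- Euclidean space `ℝ^d`. -/
abbrev Ed (d : ℕ) := EuclideanSpace ℝ (Fin d)

/-- Tempered distributions on `ℝ^d`: continuous linear functionals on the Schwartz space of
complex-valued Schwartz functions. -/
abbrev TD (d : ℕ) := 𝓢(Ed d, ℂ) →L[ℂ] ℂ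

theorem hasTemperateGrowth_const_sub {E : Type*} [NormedAddCommGroup E] [NormedSpace ℝ E]
    (t : E) : Function.HasTemperateGrowth (fun s : E => t - s) := by
  refine Function.HasTemperateGrowth.of_fderiv (k := 1) (C := ‖t‖ + 1) ?_ ?_ ?_
  · have h : (fderiv ℝ (fun s : E => t - s)) = fun _ : E => -(ContinuousLinearMap.id ℝ E) := by
      funext x
      rw [show (fun s : E => t - s) = (fun s : E => t - id s) from rfl]
      rw [fderiv_const_sub, fderiv_id]
    rw [h]
    exact Function.HasTemperateGrowth.const _
  · exact (differentiable_const t).sub differentiable_id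
  · intro x
    calc ‖t - x‖ ≤ ‖t‖ + ‖x‖ := norm_sub_le _ _
    _ ≤ (‖t‖ + 1) * (1 + ‖x‖) ^ 1 := by nlinarith [norm_nonneg x, norm_nonneg (t : E)]

theorem isometry_const_sub {E : Type*} [NormedAddCommGroup E] [NormedSpace ℝ E] (t : E) :
    Isometry (fun s : E => t - s) :=
  Isometry.of_dist_eq fun a b => by
    simp only [dist_eq_norm, sub_sub_sub_cancel_left, norm_sub_rev]

/-- For `t ∈ ℝ^d`, the map `f ↦ T_t f⁻ = (s ↦ f (t - s))` on Schwartz space, where `f⁻` is the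
reflection `f⁻(s) = f (-s)` and `T_t` is translation by `t`. -/
def reflTranslate {d : ℕ} (t : Ed d) : 𝓢(Ed d, ℂ) →L[ℂ] 𝓢(Ed d, ℂ) :=
  SchwartzMap.compCLMOfAntilipschitz ℂ (hasTemperateGrowth_const_sub t)
    (isometry_const_sub t).antilipschitz

/-- The convolution `ψ∗f` of a tempered distribution `ψ` with a Schwartz function `f`:
`(ψ∗f)(t) = ψ(T_t f⁻)`. -/
def convD {d : ℕ} (ψ : TD d) (f : 𝓢(Ed d, ℂ)) : Ed d → ℂ := fun t => ψ (reflTranslate t f)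

/-- A tempered distribution `ψ` is translation bounded on `𝓢` if `ψ∗f` is a bounded function
for every Schwartz function `f`. -/
def IsTranslationBoundedTD {d : ℕ} (ψ : TD d) : Prop :=
  ∀ f : 𝓢(Ed d, ℂ), ∃ C : ℝ, ∀ t : Ed d, ‖convD ψ f t‖ ≤ C

/-- The coordinate directions, with multiplicities, of a multi-index `β`. -/
def dirs {d : ℕ} (β : Fin d → ℕ) : List (Fin d) :=
  (List.finRange d).flatMap fun i => List.replicate (β i) i

/-- The multi-index partial derivative `D^β` on Schwartz space, as the composition of the
directional derivative operators along the coordinate directions of `β`. -/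
def mpderivOp {d : ℕ} (β : Fin d → ℕ) : 𝓢(Ed d, ℂ) →L[ℂ] 𝓢(Ed d, ℂ) :=
  (dirs β).foldr
    (fun i T => (LineDeriv.lineDerivOpCLM ℂ 𝓢(Ed d, ℂ) (EuclideanSpace.single i (1 : ℝ))).comp T)
    (ContinuousLinearMap.id ℂ _)

/-- The norm `‖f‖_{M,N} := sup_{|α| ≤ M, |β| ≤ N} sup_x |x^α (D^β f)(x)|` on Schwartz space. -/
def normMN (d M N : ℕ) (f : 𝓢(Ed d, ℂ)) : ℝ :=
  ⨆ p : {p : (Fin d → ℕ) × (Fin d → ℕ) // (∑ i, p.1 i) ≤ M ∧ (∑ i, p.2 i) ≤ N},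
    ⨆ x : Ed d, ‖(∏ i, x i ^ p.1.1 i) • mpderivOp p.1.2 f x‖

/-- The distributional derivative `D^α ψ`, given by `(D^α ψ)(f) = (−1)^{|α|} ψ(D^α f)`. -/
def mderivTD {d : ℕ} (α : Fin d → ℕ) (ψ : TD d) : TD d :=
  ((-1 : ℂ) ^ (∑ i, α i)) • (ψ.comp (mpderivOp α))

open Classical in
/-- The Schwartz representative of a function `F : ℝ^d → ℂ`, when one exists (and `0`
otherwise); representatives are unique since the coercion `𝓢(ℝ^d, ℂ) → (ℝ^d → ℂ)` is
injective. -/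
def toS (d : ℕ) (F : Ed d → ℂ) : 𝓢(Ed d, ℂ) :=
  if h : ∃ G : 𝓢(Ed d, ℂ), ⇑G = F then h.choose else 0

/-- A tempered distribution `φ` has compact support if there is a compact set `K` such that
`φ(f) = 0` for every Schwartz function `f` vanishing on a neighbourhood of `K`. -/
def HasCompactSupportTD {d : ℕ} (φ : TD d) : Prop :=
  ∃ K : Set (Ed d), IsCompact K ∧ ∀ f : 𝓢(Ed d, ℂ),
    (∃ U : Set (Ed d), IsOpen U ∧ K ⊆ U ∧ ∀ x ∈ U, f x = 0) → φ f = 0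

/-- A positive measure `ρ` on `ℝ^d` is translation bounded if
`sup_x ρ(x + K) < ∞` for every compact `K`. -/
def IsTranslationBoundedMeasure {d : ℕ} (ρ : Measure (Ed d)) : Prop :=
  ∀ K : Set (Ed d), IsCompact K →
    ∃ C : ℝ≥0∞, C ≠ ⊤ ∧ ∀ x : Ed d, ρ ((fun y => x + y) '' K) ≤ C

/-- A smooth approximate van Hove family: for each `R ≥ 1`, `h_R` is smooth and compactly
supported, with `1_{B_R} ≤ h_R ≤ 1` and `h_R = 0` outside the closed ball of radius `R + 1`. -/
def IsSmoothVanHove (d : ℕ) (h : ℝ → Ed d → ℝ) : Prop :=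
  ∀ R : ℝ, 1 ≤ R →
    ContDiff ℝ ∞ (h R) ∧ HasCompactSupport (h R) ∧
    (∀ x, 0 ≤ h R x ∧ h R x ≤ 1) ∧
    (∀ x ∈ ball (0 : Ed d) R, h R x = 1) ∧
    (∀ x ∉ closedBall (0 : Ed d) (R + 1), h R x = 0)

/-- The cutoff distribution `hψ : f ↦ ψ(h·f)` for a multiplier `h`. -/
def cutoffFn {d : ℕ} (h : Ed d → ℝ) (ψ : TD d) : 𝓢(Ed d, ℂ) → ℂ :=
  fun f => ψ (toS d fun x => (h x : ℂ) * f x)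

/-- For a distribution `θ`, the distribution `θ̃` defined by `θ̃(f) = conj (θ(f̃))`, where
`f̃(x) = conj (f (-x))`. -/
def tildeFn {d : ℕ} (θ : 𝓢(Ed d, ℂ) → ℂ) : 𝓢(Ed d, ℂ) → ℂ :=
  fun f => conj (θ (toS d fun x => conj (f (-x))))

/-- For a distribution `η`, the distribution `η⁻` defined by `η⁻(g) = η(g⁻)`, where
`g⁻(x) = g (-x)`. -/
def reflFn {d : ℕ} (η : 𝓢(Ed d, ℂ) → ℂ) : 𝓢(Ed d, ℂ) → ℂ :=
  fun g => η (toS d fun x => g (-x))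

/-- The convolution `θ∗η` of a distribution `θ` with a (compactly supported) distribution `η`,
applied to a test function `f`: `(θ∗η)(f) = θ(η⁻∗f)`, where `η⁻∗f` is the Schwartz function
`t ↦ η⁻(T_t f⁻)`. -/
def convDistApp {d : ℕ} (θ η : 𝓢(Ed d, ℂ) → ℂ) (f : 𝓢(Ed d, ℂ)) : ℂ :=
  θ (toS d fun t => reflFn η (reflTranslate t f))

/-- The autocorrelation approximant `(1/vol(B_R)) · (h_Rψ)∗(h_Rψ)~` applied to a test
function `f`. -/
def acApprox {d : ℕ} (h : ℝ → Ed d → ℝ) (ψ : TD d) (R : ℝ) (f : 𝓢(Ed d, ℂ)) : ℂ :=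
  ((volume (ball (0 : Ed d) R)).toReal)⁻¹ •
    convDistApp (cutoffFn (h R) ψ) (tildeFn (cutoffFn (h R) ψ)) f

/-- `φ` is an autocorrelation of `ψ`: for some smooth approximate van Hove family `(h_R)` and
some sequence of radii `R_n → ∞`,
`(1/vol(B_{R_n})) (h_{R_n}ψ)∗(h_{R_n}ψ)~ → φ` in the weak-∗ topology (pointwise on `𝓢`). -/
def IsAutocorrelationOf {d : ℕ} (φ ψ : TD d) : Prop :=
  ∃ h : ℝ → Ed d → ℝ, IsSmoothVanHove d h ∧
    ∃ R : ℕ → ℝ, (∀ n, 1 ≤ R n) ∧ Tendsto R atTop atTop ∧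
      ∀ f : 𝓢(Ed d, ℂ), Tendsto (fun n => acApprox h ψ (R n) f) atTop (𝓝 (φ f))

/-- A function `g : ℝ^d → ℂ` is weakly almost periodic: `g` is bounded continuous and
uniformly continuous, and its set of translates is relatively compact in the weak topology of
the Banach space `C_b(ℝ^d)`. -/
def IsWAPFun (d : ℕ) (g : Ed d → ℂ) : Prop :=
  UniformContinuous g ∧
  ∃ G : BoundedContinuousFunction (Ed d) ℂ, ⇑G = g ∧
    ∃ Y : Set (WeakSpace ℂ (BoundedContinuousFunction (Ed d) ℂ)), IsCompact Y ∧
      ∀ t : Ed d,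
        toWeakSpace ℂ _ (G.compContinuous ⟨fun s => s - t, by continuity⟩) ∈ Y

/-- A function `g : ℝ^d → ℂ` in `C_b` is strongly almost periodic: its set of translates is
relatively compact in the norm topology of `C_b(ℝ^d)`. -/
def IsSAPFun (d : ℕ) (g : Ed d → ℂ) : Prop :=
  ∃ G : BoundedContinuousFunction (Ed d) ℂ, ⇑G = g ∧
    ∃ Y : Set (BoundedContinuousFunction (Ed d) ℂ), IsCompact Y ∧
      ∀ t : Ed d, G.compContinuous ⟨fun s => s - t, by continuity⟩ ∈ Y

/-- A function `g : ℝ^d → ℂ` is null weakly almost periodic: it is weakly almost periodic and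
`(1/vol(B_R)) ∫_{B_R} |g| → 0` as `R → ∞`. -/
def IsWAP0Fun (d : ℕ) (g : Ed d → ℂ) : Prop :=
  IsWAPFun d g ∧
    Tendsto (fun R : ℝ => ((volume (ball (0 : Ed d) R)).toReal)⁻¹ *
      ∫ t in ball (0 : Ed d) R, ‖g t‖) atTop (𝓝 0)

/-- A tempered distribution `ψ` is positive definite if `ψ(f∗f̃)` is real and nonnegative for
every Schwartz function `f`, where `(f∗f̃)(x) = ∫ f(x-y) conj (f(-y)) dy`. -/
def IsPositiveDefiniteTD {d : ℕ} (ψ : TD d) : Prop :=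
  ∀ f : 𝓢(Ed d, ℂ),
    0 ≤ (ψ (toS d fun x => ∫ y, f (x - y) * conj (f (-y)))).re ∧
    (ψ (toS d fun x => ∫ y, f (x - y) * conj (f (-y)))).im = 0

/-- The distribution `χ̄_xψ : g ↦ ψ(χ̄_x·g)`, where `χ_x(y) = e^{2πi x·y}`. -/
def charMulFn {d : ℕ} (x : Ed d) (ψ : TD d) : 𝓢(Ed d, ℂ) → ℂ :=
  fun g => ψ (toS d fun y => Complex.exp (-(2 * (π : ℝ) * Complex.I * (⟪x, y⟫ : ℝ))) * g y)

/-! Since `θ g = (θ ∗ g⁻)(0)`, the Cauchy hypothesis gives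
`‖ψ_m g - ψ_n g‖ ≤ ε ‖g⁻‖_{M,N}`, so `ψ_n` converges pointwise to a linear functional `ψ`.
As `ψ - ψ_{n₀}` is dominated by `‖·⁻‖_{M,N}`, which is in turn dominated by finitely many
Schwartz seminorms, `ψ` is continuous. Letting `m → ∞` in the Cauchy estimate gives
`‖ψ ∗ f - ψ_n ∗ f‖_∞ ≤ ε ‖f‖_{M,N}` for large `n`, which yields both the bound on `ψ` and the
uniform convergence. -/

section PointwiseLimit

variable {X E : Type*} [SeminormedAddCommGroup E]

lemma norm_sub_le_of_tendsto {u : ℕ → E} {v : E} (hu : Tendsto u atTop (𝓝 v)) {n : ℕ} {b : ℝ}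
    (hb : ∀ᶠ m in atTop, ‖u m - u n‖ ≤ b) : ‖v - u n‖ ≤ b :=
  le_of_tendsto (hu.sub_const (u n)).norm hb

lemma cauchySeq_of_forall_norm_sub_le_mul {u : ℕ → E} {c : ℝ}
    (hu : ∀ ε > 0, ∃ n₀, ∀ m ≥ n₀, ∀ n ≥ n₀, ‖u m - u n‖ ≤ ε * c) : CauchySeq u := by
  refine Metric.cauchySeq_iff.2 fun ε hε => ?_
  obtain ⟨δ, hδ, hδc⟩ := exists_pos_mul_lt hε c
  obtain ⟨n₀, hn₀⟩ := hu δ hδ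
  refine ⟨n₀, fun m hm n hn => ?_⟩
  rw [dist_eq_norm]
  exact (hn₀ m hm n hn).trans_lt (by rwa [mul_comm])

lemma tendstoUniformly_of_forall_norm_sub_le_mul {u : ℕ → X → E} {v : X → E} {c : ℝ}
    (hu : ∀ ε > 0, ∃ n₀, ∀ n ≥ n₀, ∀ x, ‖v x - u n x‖ ≤ ε * c) :
    TendstoUniformly u v atTop := by
  refine Metric.tendstoUniformly_iff.2 fun ε hε => ?_
  obtain ⟨δ, hδ, hδc⟩ := exists_pos_mul_lt hε c
  obtain ⟨n₀, hn₀⟩ := hu δ hδ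
  refine eventually_atTop.2 ⟨n₀, fun n hn x => ?_⟩
  rw [dist_eq_norm]
  exact (hn₀ n hn x).trans_lt (by rwa [mul_comm])

end PointwiseLimit

theorem ContinuousLinearMap.exists_tendsto_of_forall_norm_sub_le_mul
    {𝕜 E F : Type*} [NormedField 𝕜] [AddCommGroup E] [Module 𝕜 E] [TopologicalSpace E]
    [IsTopologicalAddGroup E] [NormedAddCommGroup F] [NormedSpace 𝕜 F] [CompleteSpace F]
    {ψ : ℕ → E →L[𝕜] F} {p : E → ℝ} (hp : Tendsto p (𝓝 0) (𝓝 0))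
    (hψ : ∀ ε > 0, ∃ n₀, ∀ m ≥ n₀, ∀ n ≥ n₀, ∀ x, ‖ψ m x - ψ n x‖ ≤ ε * p x) :
    ∃ φ : E →L[𝕜] F, ∀ x, Tendsto (fun n => ψ n x) atTop (𝓝 (φ x)) := by
  choose φ hφ using fun x => cauchySeq_tendsto_of_complete <|
    cauchySeq_of_forall_norm_sub_le_mul fun ε hε =>
      (hψ ε hε).imp fun _ h m hm n hn => h m hm n hn x
  let φₗ := linearMapOfTendsto φ (fun n => (ψ n : E →ₗ[𝕜] F)) (tendsto_pi_nhds.2 hφ)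
  obtain ⟨n₀, hn₀⟩ := hψ 1 one_pos
  have hbound : ∀ x, ‖φₗ x - ψ n₀ x‖ ≤ 1 * p x := fun x =>
    norm_sub_le_of_tendsto (hφ x) (eventually_atTop.2 ⟨n₀, fun m hm => hn₀ m hm n₀ le_rfl x⟩)
  have hcont : Continuous (φₗ - (ψ n₀ : E →ₗ[𝕜] F)) := by
    refine continuous_of_continuousAt_zero (φₗ - (ψ n₀ : E →ₗ[𝕜] F)).toAddMonoidHom ?_
    rw [ContinuousAt, map_zero]
    exact squeeze_zero_norm (fun x => by simpa using hbound x) hp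
  refine ⟨⟨φₗ, ?_⟩, hφ⟩
  convert hcont.add (ψ n₀).continuous using 1
  ext x
  simp

lemma reflTranslate_zero_apply {d : ℕ} (g : 𝓢(Ed d, ℂ)) (x : Ed d) :
    reflTranslate 0 g x = g (-x) := by
  simp [reflTranslate]

lemma convD_reflTranslate_zero {d : ℕ} (θ : TD d) (g : 𝓢(Ed d, ℂ)) :
    convD θ (reflTranslate 0 g) 0 = θ g := by
  show θ (reflTranslate 0 (reflTranslate 0 g)) = θ g
  congr 1
  ext x
  simp only [reflTranslate_zero_apply, neg_neg]

lemma norm_prod_pow_apply_le {ι : Type*} [Fintype ι] {p : ℝ≥0∞} [Fact (1 ≤ p)]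
    (x : PiLp p fun _ : ι => ℝ) (α : ι → ℕ) : ‖∏ i, x i ^ α i‖ ≤ ‖x‖ ^ ∑ i, α i := by
  rw [norm_prod, ← Finset.prod_pow_eq_pow_sum]
  exact Finset.prod_le_prod (fun _ _ => norm_nonneg _) fun i _ => by
    rw [norm_pow]; exact pow_le_pow_left₀ (norm_nonneg _) (PiLp.norm_apply_le x i) _

lemma normMN_nonneg (d M N : ℕ) (f : 𝓢(Ed d, ℂ)) : 0 ≤ normMN d M N f :=
  Real.iSup_nonneg fun _ => Real.iSup_nonneg fun _ => norm_nonneg _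

def sumSeminormMN (d M N : ℕ) (f : 𝓢(Ed d, ℂ)) : ℝ :=
  ∑ β ∈ Fintype.piFinset fun _ : Fin d => Finset.range (N + 1),
    ∑ k ∈ Finset.range (M + 1), SchwartzMap.seminorm ℂ k 0 (mpderivOp β f)

lemma continuous_sumSeminormMN (d M N : ℕ) : Continuous (sumSeminormMN d M N) :=
  continuous_finsetSum _ fun β _ => continuous_finsetSum _ fun k _ =>
    ((schwartz_withSeminorms ℂ (Ed d) ℂ).continuous_seminorm (k, 0)).comp
      (mpderivOp β).continuous

lemma normMN_le_sumSeminormMN (d M N : ℕ) (f : 𝓢(Ed d, ℂ)) :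
    normMN d M N f ≤ sumSeminormMN d M N f := by
  have hinner_nonneg : ∀ β, 0 ≤ ∑ k ∈ Finset.range (M + 1),
      SchwartzMap.seminorm ℂ k 0 (mpderivOp β f) :=
    fun β => Finset.sum_nonneg fun _ _ => apply_nonneg _ _
  have hnonneg : 0 ≤ sumSeminormMN d M N f := Finset.sum_nonneg fun β _ => hinner_nonneg β
  refine Real.iSup_le (fun ⟨⟨α, β⟩, hα, hβ⟩ => Real.iSup_le (fun x => ?_) hnonneg) hnonneg
  have hβmem : β ∈ Fintype.piFinset fun _ : Fin d => Finset.range (N + 1) :=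
    Fintype.mem_piFinset.2 fun i => Finset.mem_range_succ_iff.2
      ((Finset.single_le_sum (fun j _ => Nat.zero_le (β j)) (Finset.mem_univ i)).trans hβ)
  calc ‖(∏ i, x i ^ α i) • mpderivOp β f x‖
      = ‖∏ i, x i ^ α i‖ * ‖mpderivOp β f x‖ := norm_smul _ _
    _ ≤ ‖x‖ ^ (∑ i, α i) * ‖mpderivOp β f x‖ := by
        gcongr; exact norm_prod_pow_apply_le x α
    _ ≤ SchwartzMap.seminorm ℂ (∑ i, α i) 0 (mpderivOp β f) :=
        SchwartzMap.norm_pow_mul_le_seminorm ℂ _ _ x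
    _ ≤ ∑ k ∈ Finset.range (M + 1), SchwartzMap.seminorm ℂ k 0 (mpderivOp β f) :=
        Finset.single_le_sum (f := fun k => SchwartzMap.seminorm ℂ k 0 (mpderivOp β f))
          (fun _ _ => apply_nonneg _ _) (Finset.mem_range_succ_iff.2 hα)
    _ ≤ sumSeminormMN d M N f := Finset.single_le_sum (fun β _ => hinner_nonneg β) hβmem

lemma tendsto_normMN_zero (d M N : ℕ) : Tendsto (normMN d M N) (𝓝 0) (𝓝 0) := by
  refine squeeze_zero (normMN_nonneg d M N) (normMN_le_sumSeminormMN d M N) ?_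
  simpa [sumSeminormMN] using (continuous_sumSeminormMN d M N).tendsto 0

/-- If `(ψ_n)` is a sequence in `𝓢'_{M,N}` that is Cauchy for the norm
`‖ψ‖_{M,N} = sup_{f ≠ 0} ‖ψ∗f‖_∞ / ‖f‖_{M,N}`, then there is `ψ ∈ 𝓢'_{M,N}` with
`ψ_n∗f → ψ∗f` uniformly for every Schwartz `f`. -/
theorem statement1 (d M N : ℕ) (ψn : ℕ → TD d)
    (hmem : ∀ n : ℕ, ∃ C : ℝ, ∀ (f : 𝓢(Ed d, ℂ)) (t : Ed d),
      ‖convD (ψn n) f t‖ ≤ C * normMN d M N f)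
    (hcauchy : ∀ ε : ℝ, 0 < ε → ∃ n₀ : ℕ, ∀ m, n₀ ≤ m → ∀ n, n₀ ≤ n →
      ∀ (f : 𝓢(Ed d, ℂ)) (t : Ed d),
        ‖convD (ψn m) f t - convD (ψn n) f t‖ ≤ ε * normMN d M N f) :
    ∃ ψ : TD d,
      (∃ C : ℝ, ∀ (f : 𝓢(Ed d, ℂ)) (t : Ed d), ‖convD ψ f t‖ ≤ C * normMN d M N f) ∧
      ∀ f : 𝓢(Ed d, ℂ),
        TendstoUniformly (fun n t => convD (ψn n) f t) (convD ψ f) atTop := by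
  obtain ⟨ψ, hψ⟩ := ContinuousLinearMap.exists_tendsto_of_forall_norm_sub_le_mul
    (p := fun g => normMN d M N (reflTranslate 0 g))
    ((tendsto_normMN_zero d M N).comp ((reflTranslate 0).continuous.tendsto' 0 0 (map_zero _)))
    fun ε hε => (hcauchy ε hε).imp fun n₀ h m hm n hn g => by
      simpa only [convD_reflTranslate_zero] using h m hm n hn (reflTranslate 0 g) 0
  have hlim : ∀ ε > 0, ∃ n₀, ∀ n ≥ n₀, ∀ f t,
      ‖convD ψ f t - convD (ψn n) f t‖ ≤ ε * normMN d M N f := fun ε hε =>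
    (hcauchy ε hε).imp fun n₀ h n hn f t => norm_sub_le_of_tendsto (hψ _)
      (eventually_atTop.2 ⟨n₀, fun m hm => h m hm n hn f t⟩)
  refine ⟨ψ, ?_, fun f => tendstoUniformly_of_forall_norm_sub_le_mul fun ε hε =>
    (hlim ε hε).imp fun n₀ h n hn t => h n hn f t⟩
  obtain ⟨n₀, hn₀⟩ := hlim 1 one_pos
  obtain ⟨C, hC⟩ := hmem n₀
  refine ⟨1 + C, fun f t => ?_⟩
  calc ‖convD ψ f t‖ ≤ ‖convD ψ f t - convD (ψn n₀) f t‖ + ‖convD (ψn n₀) f t‖ :=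
        norm_le_norm_sub_add _ _
    _ ≤ 1 * normMN d M N f + C * normMN d M N f := add_le_add (hn₀ n₀ le_rfl f t) (hC f t)
    _ = (1 + C) * normMN d M N f := by ring
end
end

section
/- Let μ be a positive regular Borel measure on ℝ^d that is finite on compact sets. Then the following are equivalent: (i) μ is translation bounded, i.e. sup_{x ∈ ℝ^d} μ(x + K) < ∞ for every compact K ⊆ ℝ^d; (ii) every Schwartz function is μ-integrable, the linear functional f ↦ ∫ f dμ defines a tempered distribution (it is continuous on 𝓢(ℝ^d)), and this tempered distribution is translation bounded on 𝓢, i.e. for every f ∈ 𝓢(ℝ^d) the function t ↦ ∫ f(t − s) dμ(s) is bounded on ℝ^d. -/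
/- Common setting: tempered distributions on ℝ^d, translation boundedness, convolution with
Schwartz functions, smooth approximate van Hove families, autocorrelation, and almost
periodicity, following "Diffraction theory and almost periodic distributions"
(Strungaru–Terauds). -/

open MeasureTheory SchwartzMap Filter Topology Metric Complex
open scoped ComplexConjugate ENNReal Real RealInnerProductSpace ContDiff

noncomputable section

/-! A translation bounded measure `ρ` gives mass at most `C` to every unit ball. The weight
`w(x) = (1 + ‖x‖)^(-n)` changes at most by the factor `2^n` on unit balls, so averaging over unit
balls and Tonelli's theorem give `∫ w(t - s) dρ(s) ≤ C · 2^n · ∫ w / vol(B₁)` uniformly in `t`,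
which is finite for `n > d`. A Schwartz function is dominated by a multiple of `w`, hence
`ρ` has temperate growth and `t ↦ ∫ f(t - s) dρ(s)` is bounded.
Conversely, `ρ(x + K) ≤ ∫ φ(x - s) dρ(s)` for a smooth bump `φ` equal to `1` on a ball
containing `K`. -/

section TranslationAveraging

variable {E : Type*} [NormedAddCommGroup E] [MeasurableSpace E] [BorelSpace E]
  [SecondCountableTopology E]

theorem lintegral_setLIntegral_ball_le (ρ μ : Measure E) [SFinite ρ] [SFinite μ] {r : ℝ}
    {C : ℝ≥0∞} (hρ : ∀ w, ρ (ball w r) ≤ C) {G : E → ℝ≥0∞} (hG : Measurable G) :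
    ∫⁻ s, ∫⁻ w in ball s r, G w ∂μ ∂ρ ≤ C * ∫⁻ w, G w ∂μ := by
  have hmeas : Measurable (Function.uncurry fun s w => (ball s r).indicator G w) := by
    change Measurable ({p : E × E | dist p.2 p.1 < r}.indicator (G ∘ Prod.snd))
    exact (hG.comp measurable_snd).indicator
      (measurableSet_lt (by fun_prop) measurable_const)
  calc ∫⁻ s, ∫⁻ w in ball s r, G w ∂μ ∂ρ
      = ∫⁻ s, ∫⁻ w, (ball s r).indicator G w ∂μ ∂ρ := by
        simp_rw [lintegral_indicator measurableSet_ball]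
    _ = ∫⁻ w, ∫⁻ s, (ball w r).indicator (fun _ => G w) s ∂ρ ∂μ := by
        rw [lintegral_lintegral_swap hmeas.aemeasurable]
        refine lintegral_congr fun w => lintegral_congr fun s => ?_
        classical
        rw [Set.indicator_apply, Set.indicator_apply, mem_ball_comm]
    _ = ∫⁻ w, G w * ρ (ball w r) ∂μ := by
        simp_rw [lintegral_indicator measurableSet_ball, setLIntegral_const]
    _ ≤ ∫⁻ w, C * G w ∂μ := lintegral_mono fun w => by rw [mul_comm]; gcongr; exact hρ w
    _ = C * ∫⁻ w, G w ∂μ := lintegral_const_mul C hG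

theorem measure_ball_mul_lintegral_le (ρ μ : Measure E) [SFinite ρ] [SFinite μ]
    [μ.IsAddLeftInvariant] {r : ℝ} {c C : ℝ≥0∞} (hρ : ∀ w, ρ (ball w r) ≤ C)
    {G : E → ℝ≥0∞} (hG : Measurable G) (hGc : ∀ s w, dist w s < r → G s ≤ c * G w) :
    μ (ball 0 r) * ∫⁻ s, G s ∂ρ ≤ C * (c * ∫⁻ w, G w ∂μ) := by
  have hball : ∀ s, μ (ball s r) = μ (ball 0 r) := fun s => by
    rw [← measure_preimage_add μ s, preimage_add_ball, sub_self]
  calc μ (ball 0 r) * ∫⁻ s, G s ∂ρ = ∫⁻ s, ∫⁻ _ in ball s r, G s ∂μ ∂ρ := by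
        rw [← lintegral_const_mul _ hG]
        simp_rw [setLIntegral_const, hball, mul_comm]
    _ ≤ ∫⁻ s, ∫⁻ w in ball s r, c * G w ∂μ ∂ρ :=
        lintegral_mono fun s => setLIntegral_mono' measurableSet_ball fun w hw => hGc s w hw
    _ ≤ C * ∫⁻ w, c * G w ∂μ := lintegral_setLIntegral_ball_le ρ μ hρ (hG.const_mul c)
    _ = C * (c * ∫⁻ w, G w ∂μ) := by rw [lintegral_const_mul c hG]

end TranslationAveraging

theorem one_add_norm_rpow_neg_le {E : Type*} [SeminormedAddCommGroup E] {n : ℝ} (hn : 0 ≤ n)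
    {a b : E} (hab : ‖a - b‖ ≤ 1) : (1 + ‖a‖) ^ (-n) ≤ 2 ^ n * (1 + ‖b‖) ^ (-n) := by
  have hb : 1 + ‖b‖ ≤ 2 * (1 + ‖a‖) := by
    have := norm_le_norm_add_norm_sub' b a
    rw [norm_sub_rev] at this
    linarith [norm_nonneg a]
  calc (1 + ‖a‖) ^ (-n) = 2 ^ n * (2 * (1 + ‖a‖)) ^ (-n) := by
        rw [Real.mul_rpow (by norm_num) (by positivity), ← mul_assoc,
          ← Real.rpow_add (by norm_num), add_neg_cancel, Real.rpow_zero, one_mul]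
    _ ≤ 2 ^ n * (1 + ‖b‖) ^ (-n) := mul_le_mul_of_nonneg_left
        (Real.rpow_le_rpow_of_nonpos (by positivity) hb (neg_nonpos.mpr hn)) (by positivity)

theorem exists_lintegral_one_add_norm_sub_rpow_neg_le {E : Type*} [NormedAddCommGroup E]
    [NormedSpace ℝ E] [FiniteDimensional ℝ E] [MeasurableSpace E] [BorelSpace E]
    (ρ : Measure E) [SFinite ρ] {C : ℝ≥0∞} (hC : C ≠ ⊤) (hρ : ∀ w, ρ (ball w 1) ≤ C) {n : ℝ} (hn : Module.finrank ℝ E < n) :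
    ∃ M ≠ ⊤, ∀ t, ∫⁻ s, ENNReal.ofReal ((1 + ‖t - s‖) ^ (-n)) ∂ρ ≤ M := by
  have hn₀ : 0 ≤ n := (Nat.cast_nonneg _).trans hn.le
  let μ : Measure E := Measure.addHaar
  let I := ∫⁻ x, ENNReal.ofReal ((1 + ‖x‖) ^ (-n)) ∂μ
  have hI : I ≠ ⊤ := (integrable_one_add_norm hn).lintegral_lt_top.ne
  have hv₀ : μ (ball 0 1) ≠ 0 := (measure_ball_pos μ 0 one_pos).ne'
  have hv : μ (ball 0 1) ≠ ⊤ := measure_ball_lt_top.ne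
  refine ⟨(μ (ball 0 1))⁻¹ * (C * (ENNReal.ofReal (2 ^ n) * I)), by finiteness, fun t => ?_⟩
  rw [← ENNReal.mul_le_iff_le_inv hv₀ hv]
  have hG : Measurable fun s : E => ENNReal.ofReal ((1 + ‖t - s‖) ^ (-n)) := by fun_prop
  convert measure_ball_mul_lintegral_le ρ μ hρ hG (fun s w hsw => ?_) using 3
  · exact (lintegral_sub_left_eq_self (μ := μ) (fun x => ENNReal.ofReal ((1 + ‖x‖) ^ (-n))) t).symm
  · rw [← ENNReal.ofReal_mul (by positivity)]
    refine ENNReal.ofReal_le_ofReal (one_add_norm_rpow_neg_le hn₀ ?_)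
    rw [sub_sub_sub_cancel_left, ← dist_eq_norm]
    exact hsw.le

theorem SchwartzMap.exists_norm_le_mul_one_add_norm_rpow_neg {E F : Type*} [NormedAddCommGroup E]
    [NormedSpace ℝ E] [NormedAddCommGroup F] [NormedSpace ℝ F] (f : 𝓢(E, F)) (l : ℕ) :
    ∃ C, ∀ x, ‖f x‖ ≤ C * (1 + ‖x‖) ^ (-(l : ℝ)) :=
  ⟨2 ^ l * (SchwartzMap.seminorm ℝ 0 0 f + SchwartzMap.seminorm ℝ l 0 f), fun x => by
    simpa using pow_mul_le_of_le_of_pow_mul_le (k := 0) (norm_nonneg x) (norm_nonneg _)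
      (f.norm_le_seminorm ℝ x) (by simpa using f.norm_pow_mul_le_seminorm ℝ l x)⟩

theorem MeasureTheory.Measure.HasTemperateGrowth.of_lintegral_lt_top {E : Type*}
    [NormedAddCommGroup E] [MeasurableSpace E] [BorelSpace E] {ρ : Measure E} {n : ℕ}
    (h : ∫⁻ x, ENNReal.ofReal ((1 + ‖x‖) ^ (-(n : ℝ))) ∂ρ < ⊤) : ρ.HasTemperateGrowth :=
  ⟨n, (by fun_prop : Measurable fun x : E => (1 + ‖x‖) ^ (-(n : ℝ))).aestronglyMeasurable,
    (hasFiniteIntegral_iff_ofReal (.of_forall fun _ => by positivity)).mpr h⟩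

theorem SchwartzMap.exists_norm_integral_comp_sub_le {E F : Type*} [NormedAddCommGroup E]
    [NormedSpace ℝ E] [MeasurableSpace E] [NormedAddCommGroup F] [NormedSpace ℝ F]
    (ρ : Measure E) {n : ℕ} {M : ℝ≥0∞} (hM : M ≠ ⊤)
    (hρ : ∀ t, ∫⁻ s, ENNReal.ofReal ((1 + ‖t - s‖) ^ (-(n : ℝ))) ∂ρ ≤ M) (f : 𝓢(E, F)) :
    ∃ C, ∀ t, ‖∫ s, f (t - s) ∂ρ‖ ≤ C := by
  obtain ⟨C, hC⟩ := f.exists_norm_le_mul_one_add_norm_rpow_neg n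
  refine ⟨(ENNReal.ofReal C * M).toReal, fun t => ?_⟩
  refine (norm_integral_le_lintegral_norm _).trans (ENNReal.toReal_mono (by finiteness) ?_)
  calc ∫⁻ s, ENNReal.ofReal ‖f (t - s)‖ ∂ρ
      ≤ ∫⁻ s, ENNReal.ofReal C * ENNReal.ofReal ((1 + ‖t - s‖) ^ (-(n : ℝ))) ∂ρ :=
        lintegral_mono fun s => by
          rw [← ENNReal.ofReal_mul' (by positivity)]
          exact ENNReal.ofReal_le_ofReal (hC (t - s))
    _ ≤ ENNReal.ofReal C * M := by
        rw [lintegral_const_mul' _ _ ENNReal.ofReal_ne_top]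
        gcongr
        exact hρ t

theorem ContDiffBump.measure_closedBall_le_ofReal_integral_sub {E : Type*} [NormedAddCommGroup E]
    [NormedSpace ℝ E] [HasContDiffBump E] [MeasurableSpace E] [OpensMeasurableSpace E]
    (φ : ContDiffBump (0 : E)) (ρ : Measure E) (x : E) (hφ : Integrable (fun s => φ (x - s)) ρ) :
    ρ (closedBall x φ.rIn) ≤ ENNReal.ofReal (∫ s, φ (x - s) ∂ρ) := by
  rw [ofReal_integral_eq_lintegral_ofReal hφ (.of_forall fun _ => φ.nonneg),
    ← lintegral_indicator_one measurableSet_closedBall]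
  refine lintegral_mono fun s => ?_
  by_cases hs : s ∈ closedBall x φ.rIn
  · rw [Set.indicator_of_mem hs, Pi.one_apply, φ.one_of_mem_closedBall, ENNReal.ofReal_one]
    rwa [mem_closedBall_zero_iff, ← dist_eq_norm, dist_comm]
  · simp [Set.indicator_of_notMem hs]

section TranslationBounded

variable {d : ℕ} {ρ : Measure (Ed d)}

theorem IsTranslationBoundedMeasure.exists_measure_ball_le (h : IsTranslationBoundedMeasure ρ)
    (r : ℝ) : ∃ C ≠ ⊤, ∀ w, ρ (ball w r) ≤ C := by
  obtain ⟨C, hC, hbound⟩ := h _ (isCompact_closedBall (0 : Ed d) r)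
  refine ⟨C, hC, fun w => (measure_mono ball_subset_closedBall).trans ?_⟩
  simpa [Set.image_vadd, Metric.vadd_closedBall] using hbound w

theorem IsTranslationBoundedMeasure.isFiniteMeasureOnCompacts
    (h : IsTranslationBoundedMeasure ρ) : IsFiniteMeasureOnCompacts ρ where
  lt_top_of_isCompact K hK := by
    obtain ⟨C, hC, hbound⟩ := h K hK
    simpa using (hbound 0).trans_lt hC.lt_top

theorem IsTranslationBoundedMeasure.of_forall_schwartzMap
    (hint : ∀ f : 𝓢(Ed d, ℂ), Integrable (fun x => f x) ρ)
    (hbdd : ∀ f : 𝓢(Ed d, ℂ), ∃ C : ℝ, ∀ t : Ed d, ‖∫ s, f (t - s) ∂ρ‖ ≤ C) :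
    IsTranslationBoundedMeasure ρ := by
  intro K hK
  obtain ⟨R, hR, hKR⟩ := hK.isBounded.subset_closedBall_lt 0 0
  let φ : ContDiffBump (0 : Ed d) := ⟨R, R + 1, hR, lt_add_one R⟩
  let F : 𝓢(Ed d, ℂ) := (φ.hasCompactSupport.comp_left Complex.ofReal_zero).toSchwartzMap
    (ofRealCLM.contDiff.comp φ.contDiff)
  have hF : ∀ y, F y = φ y := fun _ => rfl
  obtain ⟨C, hC⟩ := hbdd F
  refine ⟨ENNReal.ofReal C, ENNReal.ofReal_ne_top, fun x => ?_⟩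
  have hφ : Integrable (fun s => φ (x - s)) ρ := (hint (reflTranslate x F)).re
  calc ρ ((x + ·) '' K) ≤ ρ (closedBall x R) := by
        refine measure_mono ((Set.image_mono hKR).trans ?_)
        simp
    _ ≤ ENNReal.ofReal (∫ s, φ (x - s) ∂ρ) := φ.measure_closedBall_le_ofReal_integral_sub ρ x hφ
    _ ≤ ENNReal.ofReal C := by
        refine ENNReal.ofReal_le_ofReal ((le_abs_self _).trans ?_)
        simpa only [hF, integral_complex_ofReal, Complex.norm_real, Real.norm_eq_abs] using hC x

end TranslationBounded

theorem statement5_general (d : ℕ) (ρ : Measure (Ed d)) :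
    IsTranslationBoundedMeasure ρ ↔
      ((∀ f : 𝓢(Ed d, ℂ), Integrable (fun x => f x) ρ) ∧
       (∃ ψ : TD d, ∀ f : 𝓢(Ed d, ℂ), ψ f = ∫ x, f x ∂ρ) ∧
       (∀ f : 𝓢(Ed d, ℂ), ∃ C : ℝ, ∀ t : Ed d, ‖∫ s, f (t - s) ∂ρ‖ ≤ C)) := by
  refine ⟨fun hρ => ?_, fun ⟨hint, _, hbdd⟩ => .of_forall_schwartzMap hint hbdd⟩
  have : IsFiniteMeasureOnCompacts ρ := hρ.isFiniteMeasureOnCompacts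
  obtain ⟨C, hC, hball⟩ := hρ.exists_measure_ball_le 1
  obtain ⟨M, hM, hweight⟩ := exists_lintegral_one_add_norm_sub_rpow_neg_le ρ hC hball
    (n := (d + 1 : ℕ)) (by simp)
  have : ρ.HasTemperateGrowth := .of_lintegral_lt_top <| by
    simpa only [zero_sub, norm_neg] using (hweight 0).trans_lt hM.lt_top
  exact ⟨fun f => f.integrable, ⟨integralCLM ℂ ρ, fun f => rfl⟩,
    fun f => f.exists_norm_integral_comp_sub_le ρ hM hweight⟩

/-- For a positive regular Borel measure `ρ` on `ℝ^d` (finite on compact sets),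
the following are equivalent: (i) `ρ` is translation bounded; (ii) every Schwartz function is
`ρ`-integrable, integration against `ρ` defines a tempered distribution, and this tempered
distribution is translation bounded on `𝓢`, i.e. `t ↦ ∫ f(t−s) dρ(s)` is bounded for every
Schwartz `f`. -/
theorem statement5 (d : ℕ) (ρ : Measure (Ed d)) [ρ.Regular] :
    IsTranslationBoundedMeasure ρ ↔
      ((∀ f : 𝓢(Ed d, ℂ), Integrable (fun x => f x) ρ) ∧
       (∃ ψ : TD d, ∀ f : 𝓢(Ed d, ℂ), ψ f = ∫ x, f x ∂ρ) ∧
       (∀ f : 𝓢(Ed d, ℂ), ∃ C : ℝ, ∀ t : Ed d, ‖∫ s, f (t - s) ∂ρ‖ ≤ C)) :=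
  statement5_general d ρ

end
end

section
/- Let ψ be a tempered distribution on ℝ^d whose Fourier transform is a measure, represented by the pair (ρ, u). Then for every f ∈ 𝓢(ℝ^d), the function ψ∗f is bounded and uniformly continuous, and ‖ψ∗f‖_∞ ≤ ∫ |f̂| dρ. In particular, ψ is translation bounded on 𝓢. -/
/- Common setting: tempered distributions on ℝ^d, translation boundedness, convolution with
Schwartz functions, smooth approximate van Hove families, autocorrelation, and almost
periodicity, following "Diffraction theory and almost periodic distributions"
(Strungaru–Terauds). -/

open MeasureTheory SchwartzMap Filter Topology Metric Complex
open scoped ComplexConjugate ENNReal Real RealInnerProductSpace ContDiff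

noncomputable section

/- Since `T_t f⁻ = 𝓕 (𝓕⁻ (T_t f⁻))` and `𝓕⁻ (T_t f⁻) (x) = e^{2πi t·x} f̂(x)`, the hypothesis on `ψ̂`
gives `(ψ∗f)(t) = ∫ e^{2πi t·x} f̂(x) u(x) dρ(x)`: `ψ∗f` is the Fourier–Stieltjes transform of the
finite complex measure `f̂ u ρ`. This gives the bound at once, and uniform continuity follows from
`|(ψ∗f)(t) - (ψ∗f)(t')| ≤ ∫ |e^{2πi (t-t')·x} - 1| |f̂(x)| dρ(x)`, whose right-hand side tends to `0`
with `t - t'` by dominated convergence. -/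

open scoped FourierTransform

lemma norm_fourierChar_sub_fourierChar (a b : ℝ) :
    ‖(𝐞 a : ℂ) - 𝐞 b‖ = ‖(𝐞 (a - b) : ℂ) - 1‖ := by
  conv_lhs => rw [← sub_add_cancel a b, AddChar.map_add_eq_mul, Circle.coe_mul]
  rw [← sub_one_mul, norm_mul, Circle.norm_coe, mul_one]

section FourierCharIntegral

variable {V E : Type*} [NormedAddCommGroup V] [InnerProductSpace ℝ V] [MeasurableSpace V]
  [NormedAddCommGroup E] {ρ : Measure V} {G : V → E}

lemma norm_integral_fourierChar_smul_le [NormedSpace ℂ E] (t : V) :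
    ‖∫ x, 𝐞 ⟪t, x⟫ • G x ∂ρ‖ ≤ ∫ x, ‖G x‖ ∂ρ :=
  (norm_integral_le_integral_norm _).trans_eq (by simp only [Circle.norm_smul])

variable [BorelSpace V]

lemma continuous_integral_norm_fourierChar_sub_one_mul (hG : Integrable G ρ) :
    Continuous fun h : V => ∫ x, ‖(𝐞 ⟪h, x⟫ : ℂ) - 1‖ * ‖G x‖ ∂ρ := by
  have hchar : Continuous fun p : V × V => (𝐞 ⟪p.1, p.2⟫ : ℂ) :=
    continuous_subtype_val.comp (Real.continuous_fourierChar.comp continuous_inner)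
  refine continuous_of_dominated (bound := fun x => 2 * ‖G x‖)
    (fun h => (((hchar.comp (Continuous.prodMk_right h)).sub
      continuous_const).norm.aestronglyMeasurable).mul hG.norm.aestronglyMeasurable)
    (fun h => .of_forall fun x => ?_) (hG.norm.const_mul 2)
    (.of_forall fun x =>
      ((hchar.comp (Continuous.prodMk_left x)).sub continuous_const).norm.mul continuous_const)
  rw [norm_mul, norm_norm, norm_norm]
  gcongr
  calc ‖(𝐞 ⟪h, x⟫ : ℂ) - 1‖ ≤ ‖(𝐞 ⟪h, x⟫ : ℂ)‖ + ‖(1 : ℂ)‖ := norm_sub_le _ _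
    _ = 2 := by rw [Circle.norm_coe, norm_one]; norm_num

variable [NormedSpace ℂ E]

lemma Real.fourierInv_comp_const_sub [FiniteDimensional ℝ V] (f : V → E) (t x : V) :
    𝓕⁻ (fun s => f (t - s)) x = 𝐞 ⟪t, x⟫ • 𝓕 f x := by
  rw [Real.fourierInv_eq, Real.fourier_eq, Circle.smul_def, ← integral_smul,
    ← integral_sub_left_eq_self _ volume t]
  congr 1 with w
  rw [sub_sub_cancel, inner_sub_left, sub_eq_add_neg, AddChar.map_add_eq_mul, mul_smul,
    Circle.smul_def (𝐞 ⟪t, x⟫)]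

lemma integrable_fourierChar_smul (hG : Integrable G ρ) (t : V) :
    Integrable (fun x => 𝐞 ⟪t, x⟫ • G x) ρ :=
  hG.mono ((Real.continuous_fourierChar.comp
    (continuous_const.inner continuous_id)).aestronglyMeasurable.smul hG.aestronglyMeasurable)
    (.of_forall fun x => by rw [Circle.norm_smul])

lemma norm_integral_fourierChar_smul_sub_le (hG : Integrable G ρ) (t t' : V) :
    ‖∫ x, 𝐞 ⟪t, x⟫ • G x ∂ρ - ∫ x, 𝐞 ⟪t', x⟫ • G x ∂ρ‖
      ≤ ∫ x, ‖(𝐞 ⟪t - t', x⟫ : ℂ) - 1‖ * ‖G x‖ ∂ρ := by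
  rw [← integral_sub (integrable_fourierChar_smul hG t) (integrable_fourierChar_smul hG t')]
  refine (norm_integral_le_integral_norm _).trans_eq (integral_congr_ae (.of_forall fun x => ?_))
  simp only [Circle.smul_def, ← sub_smul, norm_smul, inner_sub_left,
    ← norm_fourierChar_sub_fourierChar]

lemma uniformContinuous_integral_fourierChar_smul (hG : Integrable G ρ) :
    UniformContinuous fun t : V => ∫ x, 𝐞 ⟪t, x⟫ • G x ∂ρ := by
  have hosc : Tendsto (fun h : V => ∫ x, ‖(𝐞 ⟪h, x⟫ : ℂ) - 1‖ * ‖G x‖ ∂ρ) (𝓝 0) (𝓝 0) := by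
    simpa using (continuous_integral_norm_fourierChar_sub_one_mul hG).tendsto 0
  refine Metric.uniformContinuous_iff.mpr fun ε hε => ?_
  obtain ⟨δ, hδ, hoscδ⟩ := Metric.tendsto_nhds_nhds.mp hosc ε hε
  refine ⟨δ, hδ, fun {t t'} htt' => ?_⟩
  have hsmall := hoscδ (x := t - t') (by rwa [dist_zero_right, ← dist_eq_norm])
  rw [dist_zero_right, Real.norm_eq_abs] at hsmall
  rw [dist_eq_norm]
  exact (norm_integral_fourierChar_smul_sub_le hG t t').trans_lt ((le_abs_self _).trans_lt hsmall)

end FourierCharIntegral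

lemma convD_eq_integral_fourierChar_smul {d : ℕ} {ψ : TD d} {ρ : Measure (Ed d)} {u : Ed d → ℂ}
    (hFT : ∀ f : 𝓢(Ed d, ℂ), ψ (SchwartzMap.fourierTransformCLM ℂ f) = ∫ x, f x * u x ∂ρ)
    (f : 𝓢(Ed d, ℂ)) (t : Ed d) :
    convD ψ f t = ∫ x, 𝐞 ⟪t, x⟫ • (𝓕 (⇑f) x * u x) ∂ρ := by
  have hinv : 𝓕 (𝓕⁻ (reflTranslate t f)) = reflTranslate t f :=
    FourierTransform.fourier_fourierInv_eq _
  rw [convD, ← hinv, ← fourierTransformCLM_apply ℂ, hFT]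
  congr 1 with x
  rw [SchwartzMap.fourierInv_coe]
  change 𝓕⁻ (fun s => f (t - s)) x * u x = _
  rw [Real.fourierInv_comp_const_sub, Circle.smul_def, Circle.smul_def, smul_eq_mul, smul_eq_mul,
    mul_assoc]

theorem statement10_general (d : ℕ) (ψ : TD d) (ρ : Measure (Ed d))
    (hint : ∀ f : 𝓢(Ed d, ℂ), Integrable (fun x => f x) ρ)
    (u : Ed d → ℂ) (hu : Measurable u) (hu1 : ∀ᵐ x ∂ρ, ‖u x‖ = 1)
    (hFT : ∀ f : 𝓢(Ed d, ℂ),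
      ψ (SchwartzMap.fourierTransformCLM ℂ f) = ∫ x, f x * u x ∂ρ) :
    (∀ f : 𝓢(Ed d, ℂ), UniformContinuous (convD ψ f) ∧
      ∀ t : Ed d, ‖convD ψ f t‖ ≤ ∫ x, ‖SchwartzMap.fourierTransformCLM ℂ f x‖ ∂ρ) ∧
    IsTranslationBoundedTD ψ := by
  have main : ∀ f : 𝓢(Ed d, ℂ), UniformContinuous (convD ψ f) ∧
      ∀ t : Ed d, ‖convD ψ f t‖ ≤ ∫ x, ‖SchwartzMap.fourierTransformCLM ℂ f x‖ ∂ρ := by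
    intro f
    have hnorm : (fun x => ‖𝓕 (⇑f) x * u x‖) =ᵐ[ρ] fun x => ‖𝓕 (⇑f) x‖ := by
      filter_upwards [hu1] with x hx
      rw [norm_mul, hx, mul_one]
    have hG : Integrable (fun x => 𝓕 (⇑f) x * u x) ρ :=
      (hint (𝓕 f)).mul_bdd hu.aestronglyMeasurable (hu1.mono fun x hx => hx.le)
    have hconv : convD ψ f = fun t => ∫ x, 𝐞 ⟪t, x⟫ • (𝓕 (⇑f) x * u x) ∂ρ :=
      funext (convD_eq_integral_fourierChar_smul hFT f)
    refine ⟨hconv ▸ uniformContinuous_integral_fourierChar_smul hG, fun t => ?_⟩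
    rw [hconv]
    exact (norm_integral_fourierChar_smul_le t).trans_eq (integral_congr_ae hnorm)
  exact ⟨main, fun f => ⟨_, (main f).2⟩⟩

/-- If the Fourier transform of `ψ` is a measure, represented by `(ρ, u)`, then
for every Schwartz `f` the function `ψ∗f` is bounded and uniformly continuous with
`‖ψ∗f‖_∞ ≤ ∫ |f̂| dρ`; in particular `ψ` is translation bounded on `𝓢`. -/
theorem statement10 (d : ℕ) (ψ : TD d) (ρ : Measure (Ed d)) [ρ.Regular]
    (hint : ∀ f : 𝓢(Ed d, ℂ), Integrable (fun x => f x) ρ)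
    (u : Ed d → ℂ) (hu : Measurable u) (hu1 : ∀ᵐ x ∂ρ, ‖u x‖ = 1)
    (hFT : ∀ f : 𝓢(Ed d, ℂ),
      ψ (SchwartzMap.fourierTransformCLM ℂ f) = ∫ x, f x * u x ∂ρ) :
    (∀ f : 𝓢(Ed d, ℂ), UniformContinuous (convD ψ f) ∧
      ∀ t : Ed d, ‖convD ψ f t‖ ≤ ∫ x, ‖SchwartzMap.fourierTransformCLM ℂ f x‖ ∂ρ) ∧
    IsTranslationBoundedTD ψ :=
  statement10_general d ψ ρ hint u hu hu1 hFT

end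
end
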